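/- Suppose Ω : S^{d−1} → G(ℓ,k) is Hölder continuous and set V = ⋂_{ζ∈S^{d−1}} Ω(ζ). Then the set { ∫_{S^{d−1}} π_{Ω(ζ)^⊥}(b(ζ)) J(ζ) dσ(ζ) : b ∈ C^∞(S^{d−1}, ℂ^ℓ) } equals the orthogonal complement V^⊥ = { w ∈ ℂ^ℓ : ⟨w, v⟩ = 0 for all v ∈ V }. In particular, every such integral lies in V^⊥, and every w ∈ V^⊥ is attained by some smooth b. -/

import Mathlib

/-!
Every integrand `J(ζ) π_{Ω(ζ)^⊥}(b(ζ))` lies in `Ω(ζ)^⊥ ⊆ V^⊥`, hence so does the integral.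
Conversely, constant `b = u` already suffice: they produce `A u` for the operator
`A = ∫ J(ζ) π_{Ω(ζ)^⊥} dσ(ζ)`, and `⟪u, A u⟫ = ∫ J(ζ) ‖π_{Ω(ζ)^⊥} u‖² dσ(ζ)`. Since `J > 0`,
the integrand is continuous (Hölder continuity of `Ω`) and `σ` charges every nonempty open set,
`A u = 0` forces `u ∈ Ω(ζ)` for every `ζ`, i.e. `ker A ⊆ V`. Together with `range A ⊆ V^⊥` a
dimension count gives `range A = V^⊥`.
-/

open MeasureTheory Metric
open scoped ENNReal Manifold

/-- `J(ζ) = ∑ a_j ζ_j²`. -/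
def aJ {d : ℕ} (a : Fin d → ℝ) (ζ : EuclideanSpace ℝ (Fin d)) : ℝ :=
  ∑ j, a j * (ζ j) ^ 2

/-- The orthogonal projection of `ℂ^ℓ` onto a subspace, as an endomorphism of `ℂ^ℓ`. -/
noncomputable def sphProj {ℓ : ℕ} (L : Submodule ℂ (EuclideanSpace ℂ (Fin ℓ))) :
    EuclideanSpace ℂ (Fin ℓ) →L[ℂ] EuclideanSpace ℂ (Fin ℓ) :=
  L.subtypeL.comp L.orthogonalProjectionOnto

open Filter Topology
open scoped InnerProductSpace

theorem continuous_of_holder_of_dist_le_one {X F : Type*} [PseudoMetricSpace X]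
    [SeminormedAddCommGroup F] {f : X → F} {C α : ℝ} (hα : 0 < α)
    (hf : ∀ x y, dist x y ≤ 1 → ‖f x - f y‖ ≤ C * dist x y ^ α) : Continuous f := by
  refine continuous_iff_continuousAt.2 fun x => tendsto_iff_norm_sub_tendsto_zero.2 ?_
  have hlim : Tendsto (fun y => C * dist y x ^ α) (𝓝 x) (𝓝 0) := by
    have : Continuous fun y => C * dist y x ^ α :=
      continuous_const.mul ((continuous_id.dist (continuous_const (y := x))).rpow_const
        fun _ => Or.inr hα.le)
    simpa [Real.zero_rpow hα.ne'] using this.tendsto x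
  refine squeeze_zero' (Eventually.of_forall fun _ => norm_nonneg _) ?_ hlim
  filter_upwards [ball_mem_nhds x one_pos] with y hy using hf y x hy.le

theorem Submodule.inner_starProjection_self {𝕜 E : Type*} [RCLike 𝕜] [NormedAddCommGroup E]
    [InnerProductSpace 𝕜 E] (K : Submodule 𝕜 E) [K.HasOrthogonalProjection] (u : E) :
    ⟪u, K.starProjection u⟫_𝕜 = (‖K.starProjection u‖ : 𝕜) ^ 2 := by
  rw [← inner_self_eq_norm_sq_to_K, K.inner_starProjection_left_eq_right,
    K.starProjection_eq_self_iff.2 (K.starProjection_apply_mem u)]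

theorem LinearMap.range_eq_orthogonal_of_le {𝕜 E : Type*} [RCLike 𝕜] [NormedAddCommGroup E]
    [InnerProductSpace 𝕜 E] [FiniteDimensional 𝕜 E] {T : E →ₗ[𝕜] E} {K : Submodule 𝕜 E}
    (hrange : range T ≤ Kᗮ) (hker : ker T ≤ K) : range T = Kᗮ := by
  refine Submodule.eq_of_le_of_finrank_le hrange ?_
  have := T.finrank_range_add_finrank_ker
  have := K.finrank_add_finrank_orthogonal
  have := Submodule.finrank_mono hker
  omega

theorem aJ_pos {d : ℕ} {a : Fin d → ℝ} (ha : ∀ j, 0 < a j) {ζ : EuclideanSpace ℝ (Fin d)}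
    (hζ : ζ ≠ 0) : 0 < aJ a ζ := by
  obtain ⟨j, hj⟩ : ∃ j, ζ j ≠ 0 := by
    by_contra! h
    exact hζ (by ext j; simpa using h j)
  exact Finset.sum_pos' (fun i _ => by have := ha i; positivity)
    ⟨j, Finset.mem_univ _, by have := ha j; positivity⟩

theorem continuous_aJ {d : ℕ} (a : Fin d → ℝ) : Continuous (aJ a) := by
  unfold aJ
  fun_prop

theorem sphProj_eq_starProjection {ℓ : ℕ} (L : Submodule ℂ (EuclideanSpace ℂ (Fin ℓ))) :
    sphProj L = L.starProjection :=
  rfl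

section ProjectionIntegral

variable {X E : Type*} [MeasurableSpace X] {μ : Measure X}
  [NormedAddCommGroup E] [InnerProductSpace ℂ E]

theorem integral_mem_orthogonal [CompleteSpace E] {K : Submodule ℂ E} {f : X → E}
    (hf : ∀ x, f x ∈ Kᗮ) : ∫ x, f x ∂μ ∈ Kᗮ := by
  by_cases hfi : Integrable f μ
  · refine (Submodule.mem_orthogonal _ _).2 fun v hv => ?_
    rw [← integral_inner hfi]
    simp [Submodule.inner_right_of_mem_orthogonal hv (hf _)]
  · rw [integral_undef hfi]
    exact zero_mem _

theorem integral_smul_starProjection_orthogonal_mem [FiniteDimensional ℂ E] (J : X → ℝ)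
    (Ω : X → Submodule ℂ E) (b : X → E) :
    ∫ x, J x • (Ω x)ᗮ.starProjection (b x) ∂μ ∈ (⨅ x, Ω x)ᗮ :=
  integral_mem_orthogonal fun x => Submodule.orthogonal_le (iInf_le Ω x)
    (Submodule.smul_of_tower_mem _ _ ((Ω x)ᗮ.starProjection_apply_mem (b x)))

variable [TopologicalSpace X] [CompactSpace X] [OpensMeasurableSpace X] [IsFiniteMeasure μ]
  [FiniteDimensional ℂ E] {J : X → ℝ} {Ω : X → Submodule ℂ E}

theorem mem_iInf_of_integral_smul_starProjection_orthogonal_eq_zero [μ.IsOpenPosMeasure]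
    (hJ : Continuous J) (hJpos : ∀ x, 0 < J x)
    (hΩ : Continuous fun x => (Ω x)ᗮ.starProjection) {u : E}
    (hu : ∫ x, J x • (Ω x)ᗮ.starProjection u ∂μ = 0) : u ∈ ⨅ x, Ω x := by
  set g : X → ℝ := fun x => J x * ‖(Ω x)ᗮ.starProjection u‖ ^ 2
  have hg : Continuous g := hJ.mul ((hΩ.clm_apply continuous_const).norm.pow 2)
  have hg_integral :
      ((∫ x, g x ∂μ : ℝ) : ℂ) = ⟪u, ∫ x, J x • (Ω x)ᗮ.starProjection u ∂μ⟫_ℂ := by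
    have hi : Integrable (fun x => J x • (Ω x)ᗮ.starProjection u) μ :=
      (hJ.smul (hΩ.clm_apply continuous_const)).integrable_of_hasCompactSupport
        (.of_compactSpace _)
    rw [← integral_inner hi, ← integral_complex_ofReal]
    congr 1
    ext x
    rw [← Complex.coe_smul, inner_smul_right, Submodule.inner_starProjection_self]
    simp [g]
  rw [hu, inner_zero_right, Complex.ofReal_eq_zero] at hg_integral
  refine Submodule.mem_iInf _ |>.2 fun x => ?_
  have hgx : g x = 0 := by
    by_contra hne
    exact (hg.integral_pos_of_hasCompactSupport_nonneg_nonzero (.of_compactSpace g)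
      (fun y => mul_nonneg (hJpos y).le (sq_nonneg _)) hne).ne' hg_integral
  have hPu : (Ω x)ᗮ.starProjection u = 0 := by simpa [g, (hJpos x).ne'] using hgx
  rwa [Submodule.starProjection_apply_eq_zero_iff, Submodule.orthogonal_orthogonal] at hPu

variable (μ) in
theorem exists_integral_smul_starProjection_orthogonal_eq [μ.IsOpenPosMeasure]
    (hJ : Continuous J) (hJpos : ∀ x, 0 < J x)
    (hΩ : Continuous fun x => (Ω x)ᗮ.starProjection) {w : E} (hw : w ∈ (⨅ x, Ω x)ᗮ) :
    ∃ u, ∫ x, J x • (Ω x)ᗮ.starProjection u ∂μ = w := by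
  set A : E →L[ℂ] E := ∫ x, J x • (Ω x)ᗮ.starProjection ∂μ
  have hi : Integrable (fun x => J x • (Ω x)ᗮ.starProjection) μ :=
    (hJ.smul hΩ).integrable_of_hasCompactSupport (.of_compactSpace _)
  have hA : ∀ u, A u = ∫ x, J x • (Ω x)ᗮ.starProjection u ∂μ :=
    ContinuousLinearMap.integral_apply hi
  have hrange : LinearMap.range (A : E →ₗ[ℂ] E) = (⨅ x, Ω x)ᗮ := by
    refine LinearMap.range_eq_orthogonal_of_le ?_ fun u hu => ?_
    · rintro _ ⟨u, rfl⟩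
      simpa [hA] using integral_smul_starProjection_orthogonal_mem J Ω fun _ => u
    · exact mem_iInf_of_integral_smul_starProjection_orthogonal_eq_zero hJ hJpos hΩ
        ((hA u).symm.trans hu)
  obtain ⟨u, rfl⟩ := hrange ▸ hw
  exact ⟨u, (hA u).symm⟩

end ProjectionIntegral

theorem statement6_general (d ℓ n : ℕ)
    [Fact (Module.finrank ℝ (EuclideanSpace ℝ (Fin d)) = n + 1)]
    (a : Fin d → ℝ) (hapos : ∀ j, 0 < a j)
    (Ω : EuclideanSpace ℝ (Fin d) → Submodule ℂ (EuclideanSpace ℂ (Fin ℓ)))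
    (hΩHolder : ∃ C α : ℝ, 0 < α ∧ ∀ ζ₁ ∈ sphere (0 : EuclideanSpace ℝ (Fin d)) 1,
      ∀ ζ₂ ∈ sphere (0 : EuclideanSpace ℝ (Fin d)) 1, dist ζ₁ ζ₂ ≤ 1 →
        ‖sphProj (Ω ζ₁) - sphProj (Ω ζ₂)‖ ≤ C * dist ζ₁ ζ₂ ^ α) :
    {w : EuclideanSpace ℂ (Fin ℓ) |
      ∃ b : sphere (0 : EuclideanSpace ℝ (Fin d)) 1 → EuclideanSpace ℂ (Fin ℓ),
        ContMDiff (𝓡 n) 𝓘(ℝ, EuclideanSpace ℂ (Fin ℓ)) (⊤ : ℕ∞) b ∧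
        w = ∫ ζ : sphere (0 : EuclideanSpace ℝ (Fin d)) 1,
          aJ a (ζ : EuclideanSpace ℝ (Fin d)) • sphProj ((Ω (ζ : EuclideanSpace ℝ (Fin d)))ᗮ) (b ζ)
          ∂(volume : Measure (EuclideanSpace ℝ (Fin d))).toSphere}
    =
    {w : EuclideanSpace ℂ (Fin ℓ) | ∀ v : EuclideanSpace ℂ (Fin ℓ),
      (∀ ζ ∈ sphere (0 : EuclideanSpace ℝ (Fin d)) 1, v ∈ Ω ζ) → inner ℂ w v = (0 : ℂ)} := by
  obtain ⟨C, α, hα, hHolder⟩ := hΩHolder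
  have : CompactSpace (sphere (0 : EuclideanSpace ℝ (Fin d)) 1) :=
    isCompact_iff_compactSpace.mp (isCompact_sphere 0 1)
  have hJ : Continuous fun ζ : sphere (0 : EuclideanSpace ℝ (Fin d)) 1 => aJ a ζ :=
    (continuous_aJ a).comp continuous_subtype_val
  have hJpos (ζ : sphere (0 : EuclideanSpace ℝ (Fin d)) 1) : 0 < aJ a ζ :=
    aJ_pos hapos (ne_zero_of_mem_unit_sphere ζ)
  have hP : Continuous fun ζ : sphere (0 : EuclideanSpace ℝ (Fin d)) 1 =>
      (Ω ζ)ᗮ.starProjection := by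
    simp_rw [Submodule.starProjection_orthogonal]
    exact continuous_const.sub <| continuous_of_holder_of_dist_le_one hα
      fun ζ₁ ζ₂ h => hHolder ζ₁ ζ₁.2 ζ₂ ζ₂.2 h
  have hV (w : EuclideanSpace ℂ (Fin ℓ)) :
      w ∈ (⨅ ζ : sphere (0 : EuclideanSpace ℝ (Fin d)) 1, Ω ζ)ᗮ ↔
        ∀ v, (∀ ζ ∈ sphere (0 : EuclideanSpace ℝ (Fin d)) 1, v ∈ Ω ζ) → ⟪w, v⟫_ℂ = 0 := by
    simp [Submodule.mem_orthogonal', Submodule.mem_iInf]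
  ext w
  simp only [Set.mem_ofPred_eq, ← hV, sphProj_eq_starProjection]
  constructor
  · rintro ⟨b, -, rfl⟩
    exact integral_smul_starProjection_orthogonal_mem _ _ b
  · intro hw
    obtain ⟨u, rfl⟩ := exists_integral_smul_starProjection_orthogonal_eq
      (volume : Measure (EuclideanSpace ℝ (Fin d))).toSphere hJ hJpos hP hw
    exact ⟨fun _ => u, contMDiff_const, rfl⟩

/-- The set of integrals `∫_{S^{d-1}} π_{Ω(ζ)^⊥}(b(ζ)) J(ζ) dσ(ζ)`, over all
smooth `b : S^{d-1} → ℂ^ℓ`, equals the orthogonal complement of `V = ⋂_ζ Ω(ζ)`. -/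
theorem statement6 (d ℓ k n : ℕ) (hd : 2 ≤ d) (hk1 : 1 ≤ k) (hkl : k ≤ ℓ)
    (hn : d = n + 1)
    [Fact (Module.finrank ℝ (EuclideanSpace ℝ (Fin d)) = n + 1)]
    (a : Fin d → ℝ) (hapos : ∀ j, 0 < a j) (hasum : ∑ j, a j = d)
    (Ω : EuclideanSpace ℝ (Fin d) → Submodule ℂ (EuclideanSpace ℂ (Fin ℓ)))
    (hrank : ∀ ζ ∈ sphere (0 : EuclideanSpace ℝ (Fin d)) 1, Module.finrank ℂ (Ω ζ) = k)
    (hΩHolder : ∃ C α : ℝ, 0 < α ∧ ∀ ζ₁ ∈ sphere (0 : EuclideanSpace ℝ (Fin d)) 1,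
      ∀ ζ₂ ∈ sphere (0 : EuclideanSpace ℝ (Fin d)) 1, dist ζ₁ ζ₂ ≤ 1 →
        ‖sphProj (Ω ζ₁) - sphProj (Ω ζ₂)‖ ≤ C * dist ζ₁ ζ₂ ^ α) :
    {w : EuclideanSpace ℂ (Fin ℓ) |
      ∃ b : sphere (0 : EuclideanSpace ℝ (Fin d)) 1 → EuclideanSpace ℂ (Fin ℓ),
        ContMDiff (𝓡 n) 𝓘(ℝ, EuclideanSpace ℂ (Fin ℓ)) (⊤ : ℕ∞) b ∧
        w = ∫ ζ : sphere (0 : EuclideanSpace ℝ (Fin d)) 1,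
          aJ a (ζ : EuclideanSpace ℝ (Fin d)) • sphProj ((Ω (ζ : EuclideanSpace ℝ (Fin d)))ᗮ) (b ζ)
          ∂(volume : Measure (EuclideanSpace ℝ (Fin d))).toSphere}
    =
    {w : EuclideanSpace ℂ (Fin ℓ) | ∀ v : EuclideanSpace ℂ (Fin ℓ),
      (∀ ζ ∈ sphere (0 : EuclideanSpace ℝ (Fin d)) 1, v ∈ Ω ζ) → inner ℂ w v = (0 : ℂ)} :=
  statement6_general d ℓ n a hapos Ω hΩHolder
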